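/- Let P_n, n ∈ ℕ, be orthogonal projections in H converging strongly to the identity operator. Suppose there is a constant C > 0 such that for all n ∈ ℕ and all v ∈ H the observability inequality ‖S_n(T) P_n v‖²_H ≤ C² ∫₀^T ‖B_n* S_n(t) P_n v‖²_U dt holds. Then the limiting observability inequality ‖S(T) v‖²_H ≤ C² ∫₀^T ‖B* S(t) v‖²_U dt holds for all v ∈ H. -/

import Mathlib

open MeasureTheory Set Filter
open scoped Topology ENNReal

/-!
By the uniform boundedness principle the strongly convergent sequences `P n` and `(Bn n)†` are
uniformly bounded; together with the exponential bound on `Sn n` on `[0, T]` this makes the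
observed trajectories `t ↦ (Bn n)† (Sn n t (P n v))` uniformly bounded on `(0, T)` and
pointwise convergent there. Bounded convergence then lets both sides of the observability
inequality pass to the limit.
-/

section StrongConvergence

variable {𝕜 E F : Type*} [NontriviallyNormedField 𝕜]
  [NormedAddCommGroup E] [NormedSpace 𝕜 E] [NormedAddCommGroup F] [NormedSpace 𝕜 F]

theorem ContinuousLinearMap.exists_norm_le_of_tendsto_apply [CompleteSpace E]
    {A : ℕ → E →L[𝕜] F} (h : ∀ x, ∃ y, Tendsto (fun n => A n x) atTop (𝓝 y)) :
    ∃ M, ∀ n, ‖A n‖ ≤ M :=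
  banach_steinhaus fun x =>
    let ⟨_, hx⟩ := h x
    let ⟨C, hC⟩ := hx.norm.bddAbove_range
    ⟨C, fun n => hC ⟨n, rfl⟩⟩

theorem ContinuousLinearMap.tendsto_apply_of_tendsto_of_norm_le {ι : Type*} {l : Filter ι}
    {A : ι → E →L[𝕜] F} {A₀ : E →L[𝕜] F} {M : ℝ} (hM : ∀ i, ‖A i‖ ≤ M) {x : ι → E} {x₀ : E}
    (hA : Tendsto (fun i => A i x₀) l (𝓝 (A₀ x₀))) (hx : Tendsto x l (𝓝 x₀)) :
    Tendsto (fun i => A i (x i)) l (𝓝 (A₀ x₀)) := by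
  have hsmall : Tendsto (fun i => A i (x i - x₀)) l (𝓝 0) :=
    squeeze_zero_norm (fun i => (A i).le_of_opNorm_le (hM i) _) <| by
      simpa using (tendsto_iff_norm_sub_tendsto_zero.1 hx).const_mul M
  simpa using hsmall.add hA

end StrongConvergence

theorem Real.exp_neg_mul_le_exp_mul_abs {a t T : ℝ} (ht : 0 ≤ t) (htT : t ≤ T) :
    Real.exp (-(t * a)) ≤ Real.exp (T * |a|) :=
  Real.exp_le_exp.2 <| (neg_le_abs _).trans <| by rw [abs_mul, abs_of_nonneg ht]; gcongr

theorem tendsto_setIntegral_norm_sq_of_tendsto_of_norm_le {α E : Type*} [TopologicalSpace α]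
    [MeasurableSpace α] [OpensMeasurableSpace α] [NormedAddCommGroup E]
    {μ : Measure α} {s : Set α} {g : ℕ → α → E} {g₀ : α → E}
    {K : ℝ} (hs : MeasurableSet s) (hμs : μ s ≠ ∞) (hcont : ∀ n, ContinuousOn (g n) s)
    (hbound : ∀ n, ∀ t ∈ s, ‖g n t‖ ≤ K)
    (hlim : ∀ t ∈ s, Tendsto (fun n => g n t) atTop (𝓝 (g₀ t))) :
    Tendsto (fun n => ∫ t in s, ‖g n t‖ ^ 2 ∂μ) atTop (𝓝 (∫ t in s, ‖g₀ t‖ ^ 2 ∂μ)) := by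
  refine tendsto_integral_of_dominated_convergence (fun _ => K ^ 2)
    (fun n => ((hcont n).norm.pow 2).aestronglyMeasurable hs) (integrableOn_const hμs)
    (fun n => (ae_restrict_iff' hs).2 <| .of_forall fun t ht => ?_)
    ((ae_restrict_iff' hs).2 <| .of_forall fun t ht => (hlim t ht).norm.pow 2)
  rw [Real.norm_of_nonneg (by positivity)]
  exact pow_le_pow_left₀ (norm_nonneg _) (hbound n t ht) 2

open ContinuousLinearMap

theorem observability_inequality_carries_over_to_limit_general
    {H U : Type*}
    [NormedAddCommGroup H] [InnerProductSpace ℂ H] [CompleteSpace H]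
    [NormedAddCommGroup U] [InnerProductSpace ℂ U] [CompleteSpace U]
    (a T : ℝ) (hT : 0 < T)
    (S : ℝ → H →L[ℂ] H) (Sn : ℕ → ℝ → H →L[ℂ] H)
    (hSncont : ∀ n, ∀ x : H, ContinuousOn (fun t => Sn n t x) (Ici (0:ℝ)))
    (hSnbound : ∀ n, ∀ t : ℝ, 0 ≤ t → ‖Sn n t‖ ≤ Real.exp (-(t * a)))
    (hSconv : ∀ t : ℝ, 0 < t → ∀ x : H,
      Tendsto (fun n => Sn n t x) atTop (nhds (S t x)))
    (B : U →L[ℂ] H) (Bn : ℕ → U →L[ℂ] H)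
    (hBadjconv : ∀ x : H,
      Tendsto (fun n => ContinuousLinearMap.adjoint (Bn n) x) atTop
        (nhds (ContinuousLinearMap.adjoint B x)))
    (P : ℕ → (H →L[ℂ] H))
    (hPconv : ∀ v : H, Tendsto (fun n => P n v) atTop (nhds v))
    (C : ℝ)
    (hobs : ∀ n, ∀ v : H,
      ‖Sn n T (P n v)‖ ^ 2 ≤ C ^ 2 * ∫ t in Ioo (0:ℝ) T,
        ‖ContinuousLinearMap.adjoint (Bn n) (Sn n t (P n v))‖ ^ 2) :
    ∀ v : H,
      ‖S T v‖ ^ 2 ≤ C ^ 2 * ∫ t in Ioo (0:ℝ) T,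
        ‖ContinuousLinearMap.adjoint B (S t v)‖ ^ 2 := by
  intro v
  obtain ⟨M, hM⟩ := exists_norm_le_of_tendsto_apply fun x => ⟨_, hBadjconv x⟩
  obtain ⟨N, hN⟩ := exists_norm_le_of_tendsto_apply fun x => ⟨_, hPconv x⟩
  have hM₀ : 0 ≤ M := (norm_nonneg _).trans (hM 0)
  have htraj (t : ℝ) (ht : 0 < t) : Tendsto (fun n => Sn n t (P n v)) atTop (𝓝 (S t v)) :=
    tendsto_apply_of_tendsto_of_norm_le (fun n => hSnbound n t ht.le) (hSconv t ht v) (hPconv v)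
  have hbound (n : ℕ) (t : ℝ) (ht : t ∈ Ioo 0 T) :
      ‖adjoint (Bn n) (Sn n t (P n v))‖ ≤ M * (Real.exp (T * |a|) * (N * ‖v‖)) :=
    calc ‖adjoint (Bn n) (Sn n t (P n v))‖ ≤ M * ‖Sn n t (P n v)‖ :=
          (adjoint (Bn n)).le_of_opNorm_le (hM n) _
      _ ≤ M * (Real.exp (T * |a|) * ‖P n v‖) := by
        gcongr
        exact (Sn n t).le_of_opNorm_le ((hSnbound n t ht.1.le).trans
          (Real.exp_neg_mul_le_exp_mul_abs ht.1.le ht.2.le)) _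
      _ ≤ M * (Real.exp (T * |a|) * (N * ‖v‖)) := by
        gcongr
        exact (P n).le_of_opNorm_le (hN n) _
  have hint := tendsto_setIntegral_norm_sq_of_tendsto_of_norm_le (μ := volume) measurableSet_Ioo
    measure_Ioo_lt_top.ne
    (fun n => (adjoint (Bn n)).continuous.comp_continuousOn <|
      (hSncont n _).mono fun _ ht => ht.1.le)
    hbound (fun t ht => tendsto_apply_of_tendsto_of_norm_le hM (hBadjconv _) (htraj t ht.1))
  exact le_of_tendsto_of_tendsto' ((htraj T hT).norm.pow 2) (hint.const_mul _) fun n => hobs n v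

theorem observability_inequality_carries_over_to_limit
    {H U : Type*}
    [NormedAddCommGroup H] [InnerProductSpace ℂ H] [CompleteSpace H]
    [NormedAddCommGroup U] [InnerProductSpace ℂ U] [CompleteSpace U]
    (a T : ℝ) (hT : 0 < T)
    (S : ℝ → H →L[ℂ] H) (Sn : ℕ → ℝ → H →L[ℂ] H)
    (hS0 : S 0 = 1)
    (hSsemi : ∀ t s : ℝ, 0 ≤ t → 0 ≤ s → S (t + s) = (S t).comp (S s))
    (hScont : ∀ x : H, ContinuousOn (fun t => S t x) (Ici (0:ℝ)))
    (hSbound : ∀ t : ℝ, 0 ≤ t → ‖S t‖ ≤ Real.exp (-(t * a)))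
    (hSn0 : ∀ n, Sn n 0 = 1)
    (hSnsemi : ∀ n, ∀ t s : ℝ, 0 ≤ t → 0 ≤ s →
      Sn n (t + s) = (Sn n t).comp (Sn n s))
    (hSncont : ∀ n, ∀ x : H, ContinuousOn (fun t => Sn n t x) (Ici (0:ℝ)))
    (hSnbound : ∀ n, ∀ t : ℝ, 0 ≤ t → ‖Sn n t‖ ≤ Real.exp (-(t * a)))
    (hSconv : ∀ t : ℝ, 0 < t → ∀ x : H,
      Tendsto (fun n => Sn n t x) atTop (nhds (S t x)))
    (B : U →L[ℂ] H) (Bn : ℕ → U →L[ℂ] H)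
    (hBconv : ∀ v : U, Tendsto (fun n => Bn n v) atTop (nhds (B v)))
    (hBadjconv : ∀ x : H,
      Tendsto (fun n => ContinuousLinearMap.adjoint (Bn n) x) atTop
        (nhds (ContinuousLinearMap.adjoint B x)))
    (P : ℕ → (H →L[ℂ] H))
    (hPproj : ∀ n, IsSelfAdjoint (P n) ∧ IsIdempotentElem (P n))
    (hPconv : ∀ v : H, Tendsto (fun n => P n v) atTop (nhds v))
    (C : ℝ) (hC : 0 < C)
    (hobs : ∀ n, ∀ v : H,
      ‖Sn n T (P n v)‖ ^ 2 ≤ C ^ 2 * ∫ t in Ioo (0:ℝ) T,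
        ‖ContinuousLinearMap.adjoint (Bn n) (Sn n t (P n v))‖ ^ 2) :
    ∀ v : H,
      ‖S T v‖ ^ 2 ≤ C ^ 2 * ∫ t in Ioo (0:ℝ) T,
        ‖ContinuousLinearMap.adjoint B (S t v)‖ ^ 2 :=
  observability_inequality_carries_over_to_limit_general a T hT S Sn hSncont hSnbound hSconv B Bn
    hBadjconv P hPconv C hobs
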